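/- Let f : ℝ^{n−1} → ℝ be Lipschitz and L > max{1, Lip(f)}. Then for every x₀ = (u₀, f(u₀)) ∈ C_f, every y ∈ Γ(x₀), and every x ∈ H_f^−, one has |y − x| ≥ |y − x₀| / (8L). -/

import Mathlib

/-! Write `y = (v, s)`, `x = (u, t)` and `h = s - f u₀`. The cone condition gives `|v - u₀| < h / (4L)`,
so `|y - x₀| ≤ |v - u₀| + h ≤ 2h`. On the other hand `t < f u ≤ f u₀ + Lip(f) (|u - v| + |v - u₀|)`,
so `(s - t) + Lip(f) |u - v| > h - Lip(f) |v - u₀| > 3h/4`, while the left side is at most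
`(1 + Lip(f)) |y - x| < 2L |y - x|`. Hence `|y - x| > 3h / (8L) ≥ |y - x₀| / (8L)`. -/

open MeasureTheory Metric ENNReal Filter Set Topology

noncomputable section

/-- Projection of a point of `ℝ^(m+1)` onto its first `m` coordinates. -/
def proj {m : ℕ} (p : EuclideanSpace ℝ (Fin (m + 1))) : EuclideanSpace ℝ (Fin m) :=
  WithLp.toLp 2 (fun i : Fin m => p i.castSucc)

/-- The open region `H_f^-` below the graph of `f`. -/
def lowerSet {m : ℕ} (f : EuclideanSpace ℝ (Fin m) → ℝ) :
    Set (EuclideanSpace ℝ (Fin (m + 1))) :=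
  {p | p (Fin.last m) < f (proj p)}

/-- The cone `Γ((u₀, f u₀)) = {(u,t) : t - f u₀ > 4 L |u - u₀|}`. -/
def cone {m : ℕ} (f : EuclideanSpace ℝ (Fin m) → ℝ) (L : ℝ)
    (u₀ : EuclideanSpace ℝ (Fin m)) : Set (EuclideanSpace ℝ (Fin (m + 1))) :=
  {p | 4 * L * ‖proj p - u₀‖ < p (Fin.last m) - f u₀}

/-- The point `(u₀, f u₀)` of the graph of `f`. -/
def graphPoint {m : ℕ} (f : EuclideanSpace ℝ (Fin m) → ℝ)
    (u₀ : EuclideanSpace ℝ (Fin m)) : EuclideanSpace ℝ (Fin (m + 1)) :=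
  WithLp.toLp 2 (Fin.snoc (α := fun _ => ℝ) (WithLp.ofLp u₀) (f u₀))

section Coordinates

variable {m : ℕ}

lemma proj_sub (p q : EuclideanSpace ℝ (Fin (m + 1))) : proj (p - q) = proj p - proj q := by
  ext i; simp [proj]

lemma proj_graphPoint (f : EuclideanSpace ℝ (Fin m) → ℝ) (u₀ : EuclideanSpace ℝ (Fin m)) :
    proj (graphPoint f u₀) = u₀ := by
  ext i; simp [proj, graphPoint]

lemma graphPoint_last (f : EuclideanSpace ℝ (Fin m) → ℝ) (u₀ : EuclideanSpace ℝ (Fin m)) :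
    graphPoint f u₀ (Fin.last m) = f u₀ := by
  simp [graphPoint]

lemma norm_sq_eq_norm_proj_sq_add_last_sq (p : EuclideanSpace ℝ (Fin (m + 1))) :
    ‖p‖ ^ 2 = ‖proj p‖ ^ 2 + p (Fin.last m) ^ 2 := by
  rw [EuclideanSpace.norm_sq_eq, EuclideanSpace.norm_sq_eq, Fin.sum_univ_castSucc]
  simp [proj]

lemma norm_proj_le (p : EuclideanSpace ℝ (Fin (m + 1))) : ‖proj p‖ ≤ ‖p‖ :=
  (sq_le_sq₀ (norm_nonneg _) (norm_nonneg _)).1 <| by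
    rw [norm_sq_eq_norm_proj_sq_add_last_sq p]; nlinarith [sq_nonneg (p (Fin.last m))]

lemma abs_last_le_norm (p : EuclideanSpace ℝ (Fin (m + 1))) : |p (Fin.last m)| ≤ ‖p‖ :=
  (sq_le_sq₀ (abs_nonneg _) (norm_nonneg _)).1 <| by
    rw [sq_abs, norm_sq_eq_norm_proj_sq_add_last_sq p]; nlinarith [sq_nonneg ‖proj p‖]

lemma norm_le_norm_proj_add_abs_last (p : EuclideanSpace ℝ (Fin (m + 1))) :
    ‖p‖ ≤ ‖proj p‖ + |p (Fin.last m)| :=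
  (sq_le_sq₀ (norm_nonneg _) (by positivity)).1 <| by
    rw [norm_sq_eq_norm_proj_sq_add_last_sq p, add_sq, sq_abs]
    nlinarith [mul_nonneg (norm_nonneg (proj p)) (abs_nonneg (p (Fin.last m)))]

lemma norm_sub_graphPoint_le (f : EuclideanSpace ℝ (Fin m) → ℝ) (u₀ : EuclideanSpace ℝ (Fin m))
    (y : EuclideanSpace ℝ (Fin (m + 1))) :
    ‖y - graphPoint f u₀‖ ≤ ‖proj y - u₀‖ + |y (Fin.last m) - f u₀| := by
  simpa only [proj_sub, proj_graphPoint, PiLp.sub_apply, graphPoint_last]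
    using norm_le_norm_proj_add_abs_last (y - graphPoint f u₀)

end Coordinates

lemma LipschitzWith.sub_sub_mul_norm_lt_of_mem_lowerSet {m : ℕ}
    {f : EuclideanSpace ℝ (Fin m) → ℝ} {K : NNReal} (hf : LipschitzWith K f)
    (u₀ : EuclideanSpace ℝ (Fin m)) (y : EuclideanSpace ℝ (Fin (m + 1)))
    {x : EuclideanSpace ℝ (Fin (m + 1))} (hx : x ∈ lowerSet f) :
    y (Fin.last m) - f u₀ - K * ‖proj y - u₀‖ < (1 + K) * ‖y - x‖ := by
  have hfx : f (proj x) ≤ f u₀ + K * ‖proj x - u₀‖ := by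
    simpa only [dist_eq_norm] using hf.le_add_mul (proj x) u₀
  have htri : ‖proj x - u₀‖ ≤ ‖proj (y - x)‖ + ‖proj y - u₀‖ := by
    rw [proj_sub, norm_sub_rev (proj y)]
    exact norm_sub_le_norm_sub_add_norm_sub _ _ _
  have hlast : y (Fin.last m) - x (Fin.last m) ≤ ‖y - x‖ :=
    (le_abs_self _).trans (abs_last_le_norm (y - x))
  have hproj := norm_proj_le (y - x)
  have hx' : x (Fin.last m) < f (proj x) := hx
  nlinarith [mul_le_mul_of_nonneg_left htri K.coe_nonneg,
    mul_le_mul_of_nonneg_left hproj K.coe_nonneg]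

/-- If `f` is Lipschitz, `L > max{1, Lip f}`, `x₀ = (u₀, f u₀) ∈ C_f`,
`y ∈ Γ(x₀)` and `x ∈ H_f^-`, then `|y - x| ≥ |y - x₀| / (8L)`. -/
theorem statement10 (m : ℕ)
    (f : EuclideanSpace ℝ (Fin m) → ℝ) (Lf : NNReal) (hf : LipschitzWith Lf f)
    (L : ℝ) (hL : max 1 (Lf : ℝ) < L)
    (u₀ : EuclideanSpace ℝ (Fin m))
    (y : EuclideanSpace ℝ (Fin (m + 1))) (hy : y ∈ cone f L u₀)
    (x : EuclideanSpace ℝ (Fin (m + 1))) (hx : x ∈ lowerSet f) :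
    ‖y - graphPoint f u₀‖ / (8 * L) ≤ ‖y - x‖ := by
  obtain ⟨hL1, hLf⟩ := max_lt_iff.1 hL
  set h := y (Fin.last m) - f u₀
  set d := ‖proj y - u₀‖
  have hcone : 4 * L * d < h := hy
  have hd : 0 ≤ d := norm_nonneg _
  have hupper : ‖y - graphPoint f u₀‖ ≤ d + h := by
    have := norm_sub_graphPoint_le f u₀ y
    rwa [abs_of_pos (by nlinarith)] at this
  have hlower := hf.sub_sub_mul_norm_lt_of_mem_lowerSet u₀ y hx
  have hN : 0 ≤ ‖y - x‖ := norm_nonneg _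
  have hfar : 3 * h < 8 * L * ‖y - x‖ := by
    nlinarith [mul_le_mul_of_nonneg_left hLf.le hd, mul_le_mul_of_nonneg_right hLf.le hN]
  rw [div_le_iff₀ (by positivity)]
  linarith [le_mul_of_one_le_left hd hL1.le]
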